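/- Let X be a finite nonempty set and F : Δ_X → ℝ a convex function differentiable on Δ_X, with entropic dual F*(v) := sup_{p∈Δ_X} ⟨p, v⟩ − F(p). Then the loss ℓ^F : Δ_X → ℝ^X defined by ℓ^F(p) := F*(∇F(p))𝟙 − ∇F(p) is proper: for all p, p̂ ∈ Δ_X, ⟨p, ℓ^F(p̂)⟩ ≥ ⟨p, ℓ^F(p)⟩. -/

import Mathlib

open Finset

/-- The probability simplex on a finite type `Θ`. -/
def probSimplex (Θ : Type*) [Fintype Θ] : Set (Θ → ℝ) :=
  {μ | (∀ θ, 0 ≤ μ θ) ∧ ∑ θ, μ θ = 1}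

/-- The relative interior of the probability simplex. -/
def probRelint (Θ : Type*) [Fintype Θ] : Set (Θ → ℝ) :=
  {μ | (∀ θ, 0 < μ θ) ∧ ∑ θ, μ θ = 1}

/-- Standard inner product on `ℝ^Θ`. -/
noncomputable def ip {Θ : Type*} [Fintype Θ] (μ v : Θ → ℝ) : ℝ := ∑ θ, μ θ * v θ

/-- Entropic dual: `Φ*(v) = sup_{μ ∈ Δ_Θ} ⟨μ, v⟩ - Φ(μ)`. -/
noncomputable def edual {Θ : Type*} [Fintype Θ] (Φ : (Θ → ℝ) → ℝ) (v : Θ → ℝ) : ℝ :=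
  sSup ((fun μ => ip μ v - Φ μ) '' probSimplex Θ)

/-- The continuous linear map `v ↦ ⟨w, v⟩` representing a gradient vector `w`. -/
noncomputable def pairCLM {Θ : Type*} [Fintype Θ] (w : Θ → ℝ) : (Θ → ℝ) →L[ℝ] ℝ :=
  ∑ θ, w θ • ContinuousLinearMap.proj θ

/-- Bregman divergence of `Φ` with gradient map `g`. -/
noncomputable def breg {Θ : Type*} [Fintype Θ] (Φ : (Θ → ℝ) → ℝ)
    (g : (Θ → ℝ) → Θ → ℝ) (μ μ' : Θ → ℝ) : ℝ :=
  Φ μ - Φ μ' - ip (μ - μ') (g μ')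


/-- The proper loss associated to an entropy `F` (Savage representation):
`ℓ^F(p) = F*(∇F(p))𝟙 − ∇F(p)`. -/
noncomputable def properLoss {X : Type*} [Fintype X]
    (F : (X → ℝ) → ℝ) (gF : (X → ℝ) → X → ℝ) (p : X → ℝ) : X → ℝ :=
  fun x => edual F (gF p) - gF p x

/-!
By the first-order condition for convex functions, `∇F(q)` supports `F` at `q` on the simplex, so
the supremum defining `F*(∇F(q))` is attained at `q`. This gives Savage's representation
`⟨p, ℓ^F(q)⟩ = D_F(p, q) - F(p)` with `D_F` the Bregman divergence, and `D_F ≥ 0 = D_F(p, p)`.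
-/

theorem ConvexOn.le_sub_of_hasFDerivAt {E : Type*} [NormedAddCommGroup E] [NormedSpace ℝ E]
    {s : Set E} {f : E → ℝ} {f' : E →L[ℝ] ℝ} {x y : E} (hf : ConvexOn ℝ s f)
    (hx : x ∈ s) (hy : y ∈ s) (hfx : HasFDerivAt f f' x) :
    f' (y - x) ≤ f y - f x := by
  let line : ℝ →ᵃ[ℝ] E := AffineMap.lineMap x y
  have hline : ConvexOn ℝ (line ⁻¹' s) (f ∘ line) := hf.comp_affineMap line
  have hderiv : HasDerivAt (f ∘ line) (f' (y - x)) 0 := by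
    have hfx' : HasFDerivAt f f' (line 0) := by simpa [line] using hfx
    exact hfx'.comp_hasDerivAt 0 AffineMap.hasDerivAt_lineMap
  simpa [line, slope_def_field] using
    hline.le_slope_of_hasDerivAt (x := 0) (y := 1) (by simpa [line]) (by simpa [line])
      zero_lt_one hderiv

section InnerProduct

variable {Θ : Type*} [Fintype Θ]

lemma ip_comm (μ v : Θ → ℝ) : ip μ v = ip v μ := dotProduct_comm μ v

lemma ip_sub_left (μ ν v : Θ → ℝ) : ip (μ - ν) v = ip μ v - ip ν v := sub_dotProduct μ ν v

lemma pairCLM_apply (w v : Θ → ℝ) : pairCLM w v = ip w v := by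
  simp [pairCLM, ip]

end InnerProduct

lemma edual_eq_of_forall_le {Θ : Type*} [Fintype Θ] {Φ : (Θ → ℝ) → ℝ} {v q : Θ → ℝ}
    (hq : q ∈ probSimplex Θ) (hmax : ∀ μ ∈ probSimplex Θ, ip μ v - Φ μ ≤ ip q v - Φ q) :
    edual Φ v = ip q v - Φ q :=
  IsGreatest.csSup_eq ⟨⟨q, hq, rfl⟩, by rintro _ ⟨μ, hμ, rfl⟩; exact hmax μ hμ⟩

section Bregman

variable {Θ : Type*} [Fintype Θ] {F : (Θ → ℝ) → ℝ} {gF : (Θ → ℝ) → Θ → ℝ}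

lemma breg_nonneg (hconv : ConvexOn ℝ (probSimplex Θ) F) {p q : Θ → ℝ}
    (hp : p ∈ probSimplex Θ) (hq : q ∈ probSimplex Θ) (hdiff : HasFDerivAt F (pairCLM (gF q)) q) :
    0 ≤ breg F gF p q := by
  have h := hconv.le_sub_of_hasFDerivAt hq hp hdiff
  rw [pairCLM_apply, ip_comm] at h
  rw [breg]
  linarith

@[simp]
lemma breg_self (p : Θ → ℝ) : breg F gF p p = 0 := by
  simp [breg, ip]

lemma edual_gradient_eq (hconv : ConvexOn ℝ (probSimplex Θ) F)
    (hdiff : ∀ p ∈ probSimplex Θ, HasFDerivAt F (pairCLM (gF p)) p) {q : Θ → ℝ}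
    (hq : q ∈ probSimplex Θ) :
    edual F (gF q) = ip q (gF q) - F q := by
  refine edual_eq_of_forall_le hq fun μ hμ => ?_
  have h := breg_nonneg hconv hμ hq (hdiff q hq)
  rw [breg, ip_sub_left] at h
  linarith

lemma ip_properLoss_eq_breg_sub (hconv : ConvexOn ℝ (probSimplex Θ) F)
    (hdiff : ∀ p ∈ probSimplex Θ, HasFDerivAt F (pairCLM (gF p)) p) {p q : Θ → ℝ}
    (hp : p ∈ probSimplex Θ) (hq : q ∈ probSimplex Θ) :
    ip p (properLoss F gF q) = breg F gF p q - F p := by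
  have hsum : ∑ θ, p θ * edual F (gF q) = edual F (gF q) := by
    rw [← Finset.sum_mul, hp.2, one_mul]
  have hloss : ip p (properLoss F gF q) = edual F (gF q) - ip p (gF q) := by
    simp only [properLoss, ip, mul_sub, Finset.sum_sub_distrib, hsum]
  rw [hloss, edual_gradient_eq hconv hdiff hq, breg, ip_sub_left]
  ring

end Bregman

theorem stmt_13_general {X : Type*} [Fintype X]
    (F : (X → ℝ) → ℝ)
    (hconv : ConvexOn ℝ (probSimplex X) F)
    (gF : (X → ℝ) → X → ℝ)
    (hdiff : ∀ p ∈ probSimplex X, HasFDerivAt F (pairCLM (gF p)) p)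
    (p phat : X → ℝ) (hp : p ∈ probSimplex X) (hphat : phat ∈ probSimplex X) :
    ip p (properLoss F gF p) ≤ ip p (properLoss F gF phat) := by
  rw [ip_properLoss_eq_breg_sub hconv hdiff hp hp, ip_properLoss_eq_breg_sub hconv hdiff hp hphat,
    breg_self]
  linarith [breg_nonneg hconv hp hphat (hdiff phat hphat)]

/-- The loss `ℓ^F` is proper. -/
theorem stmt_13 {X : Type*} [Fintype X] [Nonempty X]
    (F : (X → ℝ) → ℝ)
    (hconv : ConvexOn ℝ (probSimplex X) F)
    (gF : (X → ℝ) → X → ℝ)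
    (hdiff : ∀ p ∈ probSimplex X, HasFDerivAt F (pairCLM (gF p)) p)
    (p phat : X → ℝ) (hp : p ∈ probSimplex X) (hphat : phat ∈ probSimplex X) :
    ip p (properLoss F gF p) ≤ ip p (properLoss F gF phat) :=
  stmt_13_general F hconv gF hdiff p phat hp hphat
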